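/- Suppose u : I → ℂ (I a bounded interval with probability density π) lies in the Sobolev-type space H^q(π dz), and let P_K u denote its orthogonal projection onto the span of the first K orthogonal polynomials with respect to π. If u(z) = e^{i a(z) t / ε} u_in(z) with a, u_in smooth and a' bounded below in modulus, then every bound of the form ‖u − P_K u‖_{L²(π dz)} ≤ C ‖∂_z^q u‖_{L²(π dz)} K^{−q} yields ‖u − P_K u‖_{L²(π dz)} ≤ C' ε^{−q} K^{−q}; in particular, ∂_z^q u has L² norm of size at least c t^q ε^{−q} for small ε, so K must grow like ε^{−1} to maintain a fixed error tolerance. -/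

import Mathlib

/-!
Since the phase factor `e^{i a t/ε}` has modulus one, `|∂_z u| = |(i t/ε) a' u_in + u_in'|`,
whose first term has modulus at least `α t m/ε`. The reverse triangle inequality gives the
pointwise lower bound, and Minkowski's inequality in `L²(μ)`, together with `‖c‖_{L²(μ)} = c`
for a probability measure, the `L²` lower bound. Conversely, Minkowski bounds `‖∂_z u‖_{L²}` by
`(|t|/ε) ‖a' u_in‖_{L²} + ‖u_in'‖_{L²} ≤ ε⁻¹ (|t| ‖a' u_in‖_{L²} + ‖u_in'‖_{L²})` for `ε ≤ 1`.
-/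

open MeasureTheory Complex

section L2

variable {X E F 𝕜 : Type*} [MeasurableSpace X] {μ : Measure X}
  [NormedAddCommGroup E] [NormedAddCommGroup F]

theorem MeasureTheory.MemLp.sqrt_integral_norm_sq_eq {f : X → E} (hf : MemLp f 2 μ) :
    √(∫ x, ‖f x‖ ^ 2 ∂μ) = (eLpNorm f 2 μ).toReal := by
  rw [hf.eLpNorm_eq_integral_rpow_norm two_ne_zero ENNReal.ofNat_ne_top,
    ENNReal.toReal_ofReal (by positivity), Real.sqrt_eq_rpow]
  norm_num

theorem sqrt_integral_norm_sq_add_le {f g : X → E} (hf : MemLp f 2 μ) (hg : MemLp g 2 μ) :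
    √(∫ x, ‖f x + g x‖ ^ 2 ∂μ) ≤ √(∫ x, ‖f x‖ ^ 2 ∂μ) + √(∫ x, ‖g x‖ ^ 2 ∂μ) := by
  have hfg := (hf.add hg).sqrt_integral_norm_sq_eq
  simp only [Pi.add_apply] at hfg
  rw [hfg, hf.sqrt_integral_norm_sq_eq,
    hg.sqrt_integral_norm_sq_eq, ← ENNReal.toReal_add hf.eLpNorm_ne_top hg.eLpNorm_ne_top]
  exact ENNReal.toReal_mono (ENNReal.add_ne_top.2 ⟨hf.eLpNorm_ne_top, hg.eLpNorm_ne_top⟩)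
    (eLpNorm_add_le hf.1 hg.1 one_le_two)

theorem sqrt_integral_norm_sq_const_smul [NormedField 𝕜] [NormedSpace 𝕜 E] (c : 𝕜) (f : X → E) :
    √(∫ x, ‖c • f x‖ ^ 2 ∂μ) = ‖c‖ * √(∫ x, ‖f x‖ ^ 2 ∂μ) := by
  simp_rw [norm_smul, mul_pow, integral_const_mul]
  rw [Real.sqrt_mul (by positivity), Real.sqrt_sq (norm_nonneg c)]

theorem le_sqrt_integral_norm_sq_add [IsProbabilityMeasure μ] {f : X → E} {g : X → F}
    (hf : MemLp f 2 μ) (hg : MemLp g 2 μ) {c : ℝ} (h : ∀ x, c ≤ ‖f x‖ + ‖g x‖) :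
    c ≤ √(∫ x, ‖f x‖ ^ 2 ∂μ) + √(∫ x, ‖g x‖ ^ 2 ∂μ) := by
  rcases le_or_gt c 0 with hc | hc
  · exact hc.trans (by positivity)
  rw [hf.sqrt_integral_norm_sq_eq, hg.sqrt_integral_norm_sq_eq,
    ← ENNReal.toReal_add hf.eLpNorm_ne_top hg.eLpNorm_ne_top]
  have hconst : eLpNorm (fun _ ↦ c) 2 μ = ENNReal.ofReal c := by
    simp [eLpNorm_const c two_ne_zero (IsProbabilityMeasure.ne_zero μ), Real.enorm_of_nonneg hc.le]
  calc c = (eLpNorm (fun _ ↦ c) 2 μ).toReal := by rw [hconst, ENNReal.toReal_ofReal hc.le]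
    _ ≤ (eLpNorm f 2 μ + eLpNorm g 2 μ).toReal := by
      refine ENNReal.toReal_mono (ENNReal.add_ne_top.2 ⟨hf.eLpNorm_ne_top, hg.eLpNorm_ne_top⟩) ?_
      calc eLpNorm (fun _ ↦ c) 2 μ ≤ eLpNorm (fun x ↦ ‖f x‖ + ‖g x‖) 2 μ :=
            eLpNorm_mono_real fun x ↦ by rw [Real.norm_of_nonneg hc.le]; exact h x
        _ ≤ eLpNorm (fun x ↦ ‖f x‖) 2 μ + eLpNorm (fun x ↦ ‖g x‖) 2 μ :=
            eLpNorm_add_le hf.norm.1 hg.norm.1 one_le_two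
        _ = eLpNorm f 2 μ + eLpNorm g 2 μ := by rw [eLpNorm_norm, eLpNorm_norm]

theorem sqrt_integral_norm_sq_I_mul_div_smul_add_le {v w : X → ℂ} (hv : MemLp v 2 μ)
    (hw : MemLp w 2 μ) (t : ℝ) {ε : ℝ} (hε : 0 < ε) (hε1 : ε ≤ 1) :
    √(∫ x, ‖(I * t / ε) • v x + w x‖ ^ 2 ∂μ)
      ≤ ε⁻¹ * (|t| * √(∫ x, ‖v x‖ ^ 2 ∂μ) + √(∫ x, ‖w x‖ ^ 2 ∂μ)) := by
  have hw_le : √(∫ x, ‖w x‖ ^ 2 ∂μ) ≤ ε⁻¹ * √(∫ x, ‖w x‖ ^ 2 ∂μ) :=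
    le_mul_of_one_le_left (by positivity) ((one_le_inv₀ hε).2 hε1)
  calc _ ≤ √(∫ x, ‖(I * t / ε) • v x‖ ^ 2 ∂μ) + √(∫ x, ‖w x‖ ^ 2 ∂μ) :=
        sqrt_integral_norm_sq_add_le (hv.const_smul (I * t / ε : ℂ)) hw
    _ = ε⁻¹ * (|t| * √(∫ x, ‖v x‖ ^ 2 ∂μ)) + √(∫ x, ‖w x‖ ^ 2 ∂μ) := by
        rw [sqrt_integral_norm_sq_const_smul, norm_div, norm_mul, norm_I, one_mul, norm_real,
          norm_real, Real.norm_eq_abs, Real.norm_of_nonneg hε.le]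
        ring
    _ ≤ _ := by linarith

end L2

section PhaseModulation

theorem norm_cexp_I_mul_ofReal_mul_div (a t ε : ℝ) : ‖cexp (I * a * t / ε)‖ = 1 := by
  rw [Complex.norm_exp]
  simp

theorem hasDerivAt_cexp_phase_mul {a : ℝ → ℝ} {a'z : ℝ} {u : ℝ → ℂ} {u'z : ℂ} {z : ℝ}
    (ha : HasDerivAt a a'z z) (hu : HasDerivAt u u'z z) (t ε : ℝ) :
    HasDerivAt (fun z' ↦ cexp (I * a z' * t / ε) * u z')
      (cexp (I * a z * t / ε) * ((I * t / ε) • (a'z * u z) + u'z)) z := by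
  have hphase : HasDerivAt (fun z' ↦ I * a z' * t / ε) (I * a'z * t / ε) z :=
    ((ha.ofReal_comp.const_mul I).mul_const _).div_const _
  exact (hphase.cexp.mul hu).congr_deriv (by rw [smul_eq_mul]; ring)

theorem norm_deriv_cexp_phase_mul {a : ℝ → ℝ} {a'z : ℝ} {u : ℝ → ℂ} {u'z : ℂ} {z : ℝ}
    (ha : HasDerivAt a a'z z) (hu : HasDerivAt u u'z z) (t ε : ℝ) :
    ‖deriv (fun z' ↦ cexp (I * a z' * t / ε) * u z') z‖ = ‖(I * t / ε) • (a'z * u z) + u'z‖ := by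
  rw [(hasDerivAt_cexp_phase_mul ha hu t ε).deriv, norm_mul, norm_cexp_I_mul_ofReal_mul_div,
    one_mul]

theorem sub_norm_le_norm_smul_mul_add {α m t ε b : ℝ} {v w : ℂ} (ht : 0 < t) (hε : 0 < ε)
    (hm : 0 ≤ m) (hb : α ≤ |b|) (hv : m ≤ ‖v‖) :
    α * t * m / ε - ‖w‖ ≤ ‖(I * t / ε) • (b * v) + w‖ := by
  have hmain : α * t * m / ε ≤ ‖(I * t / ε) • (b * v)‖ := by
    rw [norm_smul, norm_mul, Complex.norm_real, Real.norm_eq_abs]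
    calc α * t * m / ε = t / ε * (α * m) := by ring
      _ ≤ t / ε * (|b| * ‖v‖) := by gcongr
      _ = ‖I * t / ε‖ * (|b| * ‖v‖) := by simp [abs_of_pos ht, abs_of_pos hε]
  linarith [norm_sub_le_norm_add ((I * t / ε) • (b * v)) w]

end PhaseModulation

theorem stmt11_general (μ : Measure ℝ) [IsProbabilityMeasure μ]
    (t m α : ℝ) (ht : 0 < t) (hm : 0 < m)
    (a a' : ℝ → ℝ) (uin uin' : ℝ → ℂ)
    (ha : ∀ z, HasDerivAt a (a' z) z)
    (huin : ∀ z, HasDerivAt uin (uin' z) z)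
    (hlb : ∀ z, m ≤ ‖uin z‖)
    (halb : ∀ z, α ≤ |a' z|)
    (hL2uin' : MemLp uin' 2 μ)
    (hL2au : MemLp (fun z => (a' z : ℂ) * uin z) 2 μ) :
    (∀ ε : ℝ, 0 < ε → ∀ z : ℝ,
      α * t * m / ε - ‖uin' z‖
        ≤ ‖deriv (fun z' =>
            Complex.exp (Complex.I * (a z') * t / ε) * uin z') z‖) ∧
    (∀ ε : ℝ, 0 < ε →
      α * t * m / ε - Real.sqrt (∫ z, ‖uin' z‖ ^ 2 ∂μ)
        ≤ Real.sqrt (∫ z, ‖deriv (fun z' =>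
            Complex.exp (Complex.I * (a z') * t / ε) * uin z') z‖ ^ 2 ∂μ)) ∧
    (∀ (err : ℝ → ℕ → ℝ) (C : ℝ), 0 ≤ C →
      (∀ (ε : ℝ) (K : ℕ), 0 < ε → 1 ≤ K →
        err ε K ≤ C * Real.sqrt (∫ z, ‖deriv (fun z' =>
          Complex.exp (Complex.I * (a z') * t / ε) * uin z') z‖ ^ 2 ∂μ) * (K : ℝ)⁻¹) →
      ∃ C' : ℝ, ∀ (ε : ℝ) (K : ℕ), 0 < ε → ε ≤ 1 → 1 ≤ K →
        err ε K ≤ C' * ε⁻¹ * (K : ℝ)⁻¹) := by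
  have hnorm : ∀ (ε : ℝ) z, ‖deriv (fun z' ↦ cexp (I * a z' * t / ε) * uin z') z‖
      = ‖(I * t / ε) • ((a' z : ℂ) * uin z) + uin' z‖ :=
    fun ε z ↦ norm_deriv_cexp_phase_mul (ha z) (huin z) t ε
  have hL2norm : ∀ ε : ℝ, √(∫ z, ‖deriv (fun z' ↦ cexp (I * a z' * t / ε) * uin z') z‖ ^ 2 ∂μ)
      = √(∫ z, ‖(I * t / ε) • ((a' z : ℂ) * uin z) + uin' z‖ ^ 2 ∂μ) :=
    fun ε ↦ by simp_rw [hnorm]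
  have hpointwise : ∀ ε : ℝ, 0 < ε → ∀ z,
      α * t * m / ε - ‖uin' z‖ ≤ ‖(I * t / ε) • ((a' z : ℂ) * uin z) + uin' z‖ :=
    fun ε hε z ↦ sub_norm_le_norm_smul_mul_add ht hε hm.le (halb z) (hlb z)
  have hmemLp : ∀ ε : ℝ, MemLp (fun z ↦ (I * t / ε) • ((a' z : ℂ) * uin z) + uin' z) 2 μ :=
    fun ε ↦ (hL2au.const_smul (I * t / ε : ℂ)).add hL2uin'
  refine ⟨fun ε hε z ↦ hnorm ε z ▸ hpointwise ε hε z, fun ε hε ↦ ?_, fun err C hC hbound ↦ ?_⟩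
  · rw [hL2norm, sub_le_iff_le_add]
    exact le_sqrt_integral_norm_sq_add (hmemLp ε) hL2uin'
      fun z ↦ sub_le_iff_le_add.1 (hpointwise ε hε z)
  · set A := √(∫ z, ‖(a' z : ℂ) * uin z‖ ^ 2 ∂μ)
    set B := √(∫ z, ‖uin' z‖ ^ 2 ∂μ)
    refine ⟨C * (|t| * A + B), fun ε K hε hε1 hK ↦ ?_⟩
    have hderiv := sqrt_integral_norm_sq_I_mul_div_smul_add_le hL2au hL2uin' t hε hε1
    rw [← hL2norm] at hderiv
    calc err ε K ≤ _ := hbound ε K hε hK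
      _ ≤ C * (ε⁻¹ * (|t| * A + B)) * (K : ℝ)⁻¹ := by gcongr
      _ = C * (|t| * A + B) * ε⁻¹ * (K : ℝ)⁻¹ := by ring

/-- For `u(z) = e^{i a(z) t/ε} u_in(z)` with `|u_in| ≥ m > 0` and `|a'| ≥ α > 0`,
the `z`-derivative of `u` blows up like `1/ε`: pointwise
`|∂_z u| ≥ α t m/ε − |∂_z u_in|`, hence `‖∂_z u‖_{L²(μ)} ≥ α t m/ε − ‖∂_z u_in‖_{L²(μ)}`;
consequently any spectral estimate `‖u − P_K u‖ ≤ C ‖∂_z u‖_{L²} K⁻¹` yields a bound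
`‖u − P_K u‖ ≤ C' ε⁻¹ K⁻¹` with `C'` independent of `ε`, so `K` must grow like `ε⁻¹`. -/
theorem stmt11 (μ : Measure ℝ) [IsProbabilityMeasure μ]
    (t m α : ℝ) (ht : 0 < t) (hm : 0 < m) (hα : 0 < α)
    (a a' : ℝ → ℝ) (uin uin' : ℝ → ℂ)
    (ha : ∀ z, HasDerivAt a (a' z) z)
    (huin : ∀ z, HasDerivAt uin (uin' z) z)
    (hlb : ∀ z, m ≤ ‖uin z‖)
    (halb : ∀ z, α ≤ |a' z|)
    (hL2uin' : MemLp uin' 2 μ)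
    (hL2au : MemLp (fun z => (a' z : ℂ) * uin z) 2 μ)
    (hL2d : ∀ ε : ℝ, 0 < ε →
      MemLp (fun z => deriv (fun z' =>
        Complex.exp (Complex.I * (a z') * t / ε) * uin z') z) 2 μ) :
    (∀ ε : ℝ, 0 < ε → ∀ z : ℝ,
      α * t * m / ε - ‖uin' z‖
        ≤ ‖deriv (fun z' =>
            Complex.exp (Complex.I * (a z') * t / ε) * uin z') z‖) ∧
    (∀ ε : ℝ, 0 < ε →
      α * t * m / ε - Real.sqrt (∫ z, ‖uin' z‖ ^ 2 ∂μ)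
        ≤ Real.sqrt (∫ z, ‖deriv (fun z' =>
            Complex.exp (Complex.I * (a z') * t / ε) * uin z') z‖ ^ 2 ∂μ)) ∧
    (∀ (err : ℝ → ℕ → ℝ) (C : ℝ), 0 ≤ C →
      (∀ (ε : ℝ) (K : ℕ), 0 < ε → 1 ≤ K →
        err ε K ≤ C * Real.sqrt (∫ z, ‖deriv (fun z' =>
          Complex.exp (Complex.I * (a z') * t / ε) * uin z') z‖ ^ 2 ∂μ) * (K : ℝ)⁻¹) →
      ∃ C' : ℝ, ∀ (ε : ℝ) (K : ℕ), 0 < ε → ε ≤ 1 → 1 ≤ K →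
        err ε K ≤ C' * ε⁻¹ * (K : ℝ)⁻¹) :=
  stmt11_general μ t m α ht hm a a' uin uin' ha huin hlb halb hL2uin' hL2au
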